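/- Let M be an n×n matrix with Im M ≥ 0 and let D be a dissipative n×n matrix (Im D ≤ 0) with ker(Im D) = {0}, so that D − M is invertible. Then S = I + 2i √(−Im D) (D − M)^{-1} √(−Im D) is a contraction, i.e., ‖S‖ ≤ 1; moreover I − S*S = 4 √(−Im D) ((D − M)^{-1})* (Im M) (D − M)^{-1} √(−Im D). -/

import Mathlib

noncomputable section
open Matrix
open scoped ComplexOrder

/-- The square root of a positive semidefinite matrix, as `Matrix.PosSemidef.sqrt` was defined
in Mathlib (Dec 2024); removed since then in favour of `CFC.sqrt`. -/
def Matrix.PosSemidef.sqrt {n : Type*} [Fintype n] [DecidableEq n] {𝕜 : Type*} [RCLike 𝕜]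
    {A : Matrix n n 𝕜} (hA : A.PosSemidef) : Matrix n n 𝕜 :=
  (hA.1.eigenvectorUnitary : Matrix n n 𝕜) *
    diagonal ((fun r : ℝ => (r : 𝕜)) ∘ (fun r : ℝ => √r) ∘ hA.1.eigenvalues) *
    (star (hA.1.eigenvectorUnitary : Matrix n n 𝕜))

lemma aux_sqrt_herm {n : ℕ} {A : Matrix (Fin n) (Fin n) ℂ} (hA : A.PosSemidef) :
    (hA.sqrt)ᴴ = hA.sqrt := by
  unfold Matrix.PosSemidef.sqrt
  rw [conjTranspose_mul, conjTranspose_mul, diagonal_conjTranspose, ← star_eq_conjTranspose,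
    ← star_eq_conjTranspose, star_star, mul_assoc]
  congr 1; congr 1; congr 1
  funext i
  simp

lemma aux_sqrt_mul_self {n : ℕ} {A : Matrix (Fin n) (Fin n) ℂ} (hA : A.PosSemidef) :
    hA.sqrt * hA.sqrt = A := by
  unfold Matrix.PosSemidef.sqrt
  conv_rhs => rw [hA.1.spectral_theorem, Unitary.conjStarAlgAut_apply]
  have hu : star (hA.1.eigenvectorUnitary : Matrix (Fin n) (Fin n) ℂ) *
      (hA.1.eigenvectorUnitary : Matrix (Fin n) (Fin n) ℂ) = 1 := Unitary.coe_star_mul_self _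
  simp only [← mul_assoc]
  rw [mul_assoc _ (star _) _, hu, mul_one, mul_assoc _ (diagonal _) (diagonal _),
    diagonal_mul_diagonal]
  congr 3
  ext i
  simp only [Function.comp_apply]
  rw [← RCLike.ofReal_mul, Real.mul_self_sqrt (hA.eigenvalues_nonneg i)]

lemma aux_isUnit' {n : ℕ} (A : Matrix (Fin n) (Fin n) ℂ)
    (h : ((2 * Complex.I)⁻¹ • (Aᴴ - A)).PosDef) : IsUnit A := by
  rw [← Matrix.mulVec_injective_iff_isUnit]
  intro x y hxy
  by_contra hne
  have hz : x - y ≠ 0 := sub_ne_zero.mpr hne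
  have hz0 : A *ᵥ (x - y) = 0 := by rw [mulVec_sub, hxy, sub_self]
  have h1 := h.dotProduct_mulVec_pos hz
  rw [smul_mulVec, dotProduct_smul, sub_mulVec] at h1
  have h2 : star (x - y) ⬝ᵥ (Aᴴ *ᵥ (x - y)) = 0 := by
    rw [dotProduct_mulVec, ← star_mulVec, hz0]
    simp
  rw [hz0, sub_zero, h2] at h1
  simp at h1

lemma aux_identity' {n : ℕ} (R A B M D : Matrix (Fin n) (Fin n) ℂ)
    (hR : Rᴴ = R) (hRR : R * R = (2 * Complex.I)⁻¹ • (Dᴴ - D))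
    (hA : A = D - M) (hAB : A * B = 1) (hBAh : Bᴴ * Aᴴ = 1) :
    1 - (1 + (2 * Complex.I) • (R * B * R))ᴴ * (1 + (2 * Complex.I) • (R * B * R))
      = (4 : ℂ) • (R * Bᴴ * ((2 * Complex.I)⁻¹ • (M - Mᴴ)) * B * R) := by
  have hstar : star (2 * Complex.I) = -(2 * Complex.I) := by simp
  have hinv : ((2 : ℂ) * Complex.I)⁻¹ = -(2⁻¹) * Complex.I := by
    rw [mul_inv, Complex.inv_I]; ring
  have h4 : R * (Bᴴ * (R * (R * (B * R))))
      = (-(2⁻¹) * Complex.I) • (R * (Bᴴ * ((Dᴴ - D) * (B * R)))) := by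
    calc R * (Bᴴ * (R * (R * (B * R)))) = R * (Bᴴ * ((R * R) * (B * R))) := by noncomm_ring
    _ = (-(2⁻¹) * Complex.I) • (R * (Bᴴ * ((Dᴴ - D) * (B * R)))) := by
        rw [hRR, hinv]; simp only [smul_mul_assoc, mul_smul_comm]
  have e1 : Bᴴ * (Aᴴ * (B * R)) = B * R := by rw [← mul_assoc, hBAh, one_mul]
  have e2 : Bᴴ * (A * (B * R)) = Bᴴ * R := by
    rw [show A * (B * R) = (A * B) * R from (mul_assoc _ _ _).symm, hAB, one_mul]
  have e3 : M - Mᴴ = (Aᴴ - A) - (Dᴴ - D) := by rw [hA, conjTranspose_sub]; abel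
  have key2 : R * (Bᴴ * ((M - Mᴴ) * (B * R)))
      = R * (B * R) - R * (Bᴴ * R) - R * (Bᴴ * ((Dᴴ - D) * (B * R))) := by
    rw [e3]
    simp only [sub_mul, mul_sub, e1, e2]
  simp only [conjTranspose_add, conjTranspose_one, conjTranspose_smul, conjTranspose_mul,
    hR, hstar, hinv, mul_add, add_mul, one_mul, mul_one, smul_mul_smul_comm, neg_smul, neg_mul,
    smul_mul_assoc, mul_smul_comm, smul_smul, mul_assoc, mul_neg, neg_neg, smul_neg, h4, key2]
  match_scalars <;> simp [Complex.ext_iff] <;> norm_num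

/-- Let `M` be an `n×n` matrix with `Im M ≥ 0` and `D` a dissipative `n×n` matrix
(`Im D ≤ 0`) with trivial kernel of `Im D`, i.e. `-Im D` positive definite (so `D - M` is
invertible).  Then `S = I + 2i √(-Im D) (D - M)⁻¹ √(-Im D)` is a contraction, and
`I - S*S = 4 √(-Im D) ((D - M)⁻¹)* (Im M) (D - M)⁻¹ √(-Im D)`. -/
theorem lax_phillips_scattering_matrix_contraction (n : ℕ)
    (M D : Matrix (Fin n) (Fin n) ℂ)
    (hM : ((2 * Complex.I)⁻¹ • (M - Mᴴ)).PosSemidef)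
    (hD : ((2 * Complex.I)⁻¹ • (Dᴴ - D)).PosDef) :
    ‖Matrix.toEuclideanCLM (𝕜 := ℂ) (n := Fin n)
        (1 + (2 * Complex.I) • (hD.posSemidef.sqrt * (D - M)⁻¹ * hD.posSemidef.sqrt))‖ ≤ 1 ∧
    1 - (1 + (2 * Complex.I) • (hD.posSemidef.sqrt * (D - M)⁻¹ * hD.posSemidef.sqrt))ᴴ *
        (1 + (2 * Complex.I) • (hD.posSemidef.sqrt * (D - M)⁻¹ * hD.posSemidef.sqrt))
      = (4 : ℂ) • (hD.posSemidef.sqrt * ((D - M)⁻¹)ᴴ *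
          ((2 * Complex.I)⁻¹ • (M - Mᴴ)) * (D - M)⁻¹ * hD.posSemidef.sqrt) := by
  set R := hD.posSemidef.sqrt with hRdef
  set A := D - M with hAdef
  set B := A⁻¹ with hBdef
  -- A is invertible
  have hpd : ((2 * Complex.I)⁻¹ • (Aᴴ - A)).PosDef := by
    have : (2 * Complex.I)⁻¹ • (Aᴴ - A)
        = (2 * Complex.I)⁻¹ • (Dᴴ - D) + (2 * Complex.I)⁻¹ • (M - Mᴴ) := by
      rw [← smul_add]
      congr 1
      rw [hAdef, conjTranspose_sub]
      abel
    rw [this]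
    exact hD.add_posSemidef hM
  have hU : IsUnit A := aux_isUnit' A hpd
  have hAB : A * B = 1 := Matrix.mul_nonsing_inv A (Matrix.isUnit_iff_isUnit_det A |>.mp hU)
  have hBAh : Bᴴ * Aᴴ = 1 := by rw [← conjTranspose_mul, hAB, conjTranspose_one]
  have hR : Rᴴ = R := aux_sqrt_herm hD.posSemidef
  have hRR : R * R = (2 * Complex.I)⁻¹ • (Dᴴ - D) := aux_sqrt_mul_self hD.posSemidef
  -- the algebraic identity
  have hid : 1 - (1 + (2 * Complex.I) • (R * B * R))ᴴ * (1 + (2 * Complex.I) • (R * B * R))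
      = (4 : ℂ) • (R * Bᴴ * ((2 * Complex.I)⁻¹ • (M - Mᴴ)) * B * R) :=
    aux_identity' R A B M D hR hRR hAdef hAB hBAh
  refine ⟨?_, hid⟩
  -- positivity of the RHS
  have hpos : ((4 : ℂ) • (R * Bᴴ * ((2 * Complex.I)⁻¹ • (M - Mᴴ)) * B * R)).PosSemidef := by
    have h2 : (4 : ℂ) • (R * Bᴴ * ((2 * Complex.I)⁻¹ • (M - Mᴴ)) * B * R)
        = ((2 : ℂ) • (B * R))ᴴ * ((2 * Complex.I)⁻¹ • (M - Mᴴ)) * ((2 : ℂ) • (B * R)) := by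
      rw [conjTranspose_smul, conjTranspose_mul, hR, show star (2 : ℂ) = 2 from by simp]
      simp only [smul_mul_assoc, mul_smul_comm, smul_smul, mul_assoc]
      congr 1
      ring
    rw [h2]
    exact hM.conjTranspose_mul_mul_same _
  obtain ⟨Q, hQ⟩ : ∃ Q : Matrix (Fin n) (Fin n) ℂ, (4 : ℂ) • (R * Bᴴ * ((2 * Complex.I)⁻¹ • (M - Mᴴ)) * B * R) = Qᴴ * Q := by open scoped MatrixOrder in exact CStarAlgebra.nonneg_iff_eq_star_mul_self.mp hpos.nonneg
  set S := 1 + (2 * Complex.I) • (R * B * R) with hSdef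
  set φ := Matrix.toEuclideanCLM (𝕜 := ℂ) (n := Fin n) with hφ
  have hsub : 1 - star (φ S) * φ S = star (φ Q) * φ Q := by
    have hmat : (1 : Matrix (Fin n) (Fin n) ℂ) - star S * S = star Q * Q := by
      rw [Matrix.star_eq_conjTranspose, Matrix.star_eq_conjTranspose, hid, hQ]
    calc 1 - star (φ S) * φ S = φ (1 - star S * S) := by
          rw [map_sub, _root_.map_one, _root_.map_mul, map_star]
    _ = φ (star Q * Q) := by rw [hmat]
    _ = star (φ Q) * φ Q := by rw [_root_.map_mul, map_star]
  have h0 : (0 : EuclideanSpace ℂ (Fin n) →L[ℂ] EuclideanSpace ℂ (Fin n)) ≤ star (φ S) * φ S :=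
    star_mul_self_nonneg _
  have hle1 : star (φ S) * φ S ≤ 1 := by
    rw [← sub_nonneg, hsub]
    exact star_mul_self_nonneg _
  have hn : ‖star (φ S) * φ S‖ ≤ 1 :=
    (CStarAlgebra.norm_le_one_iff_of_nonneg _ h0).mpr hle1
  rw [CStarRing.norm_star_mul_self (x := φ S)] at hn
  nlinarith [norm_nonneg (φ S)]

end
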